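/- arXiv:2512.05004 — 2 statements merged into one kernel-verified Lean document; each statement's English description precedes it below -/
import Mathlib

section
/- For every natural number n, the number of involutions in the symmetric group S_n (elements s with s² = 1, including the identity) equals ∑_{0 ≤ 2k ≤ n} n! / (2^k · k! · (n-2k)!). -/
/-!
For a prime `p`, `σ ^ p = 1` exactly when every cycle of `σ` has length `p`, i.e. the cycle type
of `σ` is `p, p, …, p` (`k` times) for some `k` with `k * p ≤ n`. The permutations of that
cycle type form one conjugacy class, of size `n! / ((n - k p)! · p^k · k!)` (the order of the
centralizer in the denominator). Summing over `k` with `p = 2` counts the involutions.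
-/

open Nat Finset

namespace Equiv.Perm

variable {α : Type*} [Fintype α] [DecidableEq α]

theorem card_filter_cycleType_eq_replicate {p : ℕ} (hp : 2 ≤ p) {k : ℕ}
    (hk : k * p ≤ Fintype.card α) :
    #({σ | σ.cycleType = Multiset.replicate k p} : Finset (Perm α)) =
      (Fintype.card α)! / ((Fintype.card α - k * p)! * p ^ k * k !) := by
  have hcount :
      ∏ a ∈ (Multiset.replicate k p).toFinset, ((Multiset.replicate k p).count a)! = k ! := by
    rcases eq_or_ne k 0 with rfl | hk0 <;> simp [*]
  rw [card_of_cycleType, if_pos ⟨by simpa using hk, fun a ha => by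
    rwa [Multiset.eq_of_mem_replicate ha]⟩, hcount, Multiset.sum_replicate,
    Multiset.prod_replicate, smul_eq_mul]

theorem card_cycleType_mul_le_of_pow_prime_eq_one {p : ℕ} [Fact p.Prime] {σ : Perm α}
    (hσ : σ ^ p = 1) : Multiset.card σ.cycleType * p ≤ Fintype.card α :=
  calc Multiset.card σ.cycleType * p
      = (Multiset.replicate (Multiset.card σ.cycleType) p).sum := by simp
    _ = σ.cycleType.sum := by rw [← cycleType_of_pow_prime_eq_one hσ]
    _ ≤ Fintype.card α := σ.sum_cycleType_le

theorem card_filter_pow_prime_eq_one {p : ℕ} [hp : Fact p.Prime] :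
    #({σ | σ ^ p = 1} : Finset (Perm α)) =
      ∑ k ∈ range (Fintype.card α / p + 1),
        (Fintype.card α)! / ((Fintype.card α - k * p)! * p ^ k * k !) := by
  have hmaps : Set.MapsTo (fun σ : Perm α => Multiset.card σ.cycleType)
      ({σ | σ ^ p = 1} : Finset (Perm α)) (range (Fintype.card α / p + 1)) := by
    intro σ hσ
    simp only [coe_filter, mem_univ, true_and, Set.mem_ofPred_eq] at hσ
    simpa [Nat.lt_succ_iff, Nat.le_div_iff_mul_le hp.out.pos] using
      card_cycleType_mul_le_of_pow_prime_eq_one hσ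
  rw [card_eq_sum_card_fiberwise hmaps]
  refine sum_congr rfl fun k hk => ?_
  have hkp : k * p ≤ Fintype.card α :=
    (Nat.le_div_iff_mul_le hp.out.pos).mp (Nat.lt_succ_iff.mp (mem_range.mp hk))
  rw [← card_filter_cycleType_eq_replicate hp.out.two_le hkp]
  congr 1
  ext σ
  simp only [filter_filter, mem_filter, mem_univ, true_and, pow_prime_eq_one_iff,
    Multiset.eq_replicate]
  exact and_comm

end Equiv.Perm

/-- The number of involutions in `S_n` (elements with `s² = 1`, including the identity)
equals `∑_{0 ≤ 2k ≤ n} n! / (2^k k! (n-2k)!)`. -/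
theorem card_involutions_symmetric_group (n : ℕ) :
    Nat.card {s : Equiv.Perm (Fin n) // s ^ 2 = 1} =
      ∑ k ∈ Finset.range (n / 2 + 1), n ! / (2 ^ k * k ! * (n - 2 * k)!) := by
  rw [Nat.card_eq_fintype_card, Fintype.card_subtype, Equiv.Perm.card_filter_pow_prime_eq_one,
    Fintype.card_fin]
  refine Finset.sum_congr rfl fun k _ => ?_
  rw [mul_comm k 2]
  congr 1
  ring
end

section
/- Gauss's identity: as formal power series (or for real t with |t| < 1), ∑_{i ≥ 0} t^{i(i+1)/2} = ∏_{i ≥ 1} (1 - t^{2i}) / (1 - t^{2i-1}). -/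
/-!
Cauchy's finite `q`-binomial theorem, in the form
`∏_{i<m} (1 + q^{i+1}) ∏_{i<s} (1 + q^i) = ∑_k [m+s, k]_q q^{(k-s)(k-s+1)/2}`,
is symmetric under `k ↦ 2n+1-k` when `m = n`, `s = n + 1`, and then reads
`(-q;q)_n² = ∑_{j ≤ n} [2n+1, n+1+j]_q q^{j(j+1)/2}`.
As `n → ∞` the coefficients `[2n+1, n+1+j]_q = (q;q)_{2n+1} / ((q;q)_{n+1+j} (q;q)_{n-j})`
stay bounded and tend to `1 / (q;q)_∞`, so by Tannery's theorem
`∑_j q^{j(j+1)/2} = (q;q)_∞ (-q;q)_∞²`.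
Splitting `(q;q)_∞` into its odd and even factors `(q;q²)_∞ (q²;q²)_∞`, where
`(q²;q²)_∞ = (q;q)_∞ (-q;q)_∞`, shows that the product side has the same value.
-/

open Finset Filter Topology

def triangular (j : ℤ) : ℕ := (j * (j + 1) / 2).toNat

theorem natCast_triangular (j : ℤ) : (triangular j : ℤ) = j * (j + 1) / 2 := by
  have : 0 ≤ j * (j + 1) := by rcases le_or_gt 0 j with h | h <;> nlinarith
  exact Int.toNat_of_nonneg (Int.ediv_nonneg this zero_le_two)

theorem natCast_triangular_add_one (j : ℤ) :
    (triangular (j + 1) : ℤ) = triangular j + (j + 1) := by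
  rw [natCast_triangular, natCast_triangular, ← Int.add_mul_ediv_right _ _ two_ne_zero]
  ring_nf

theorem triangular_neg_sub_one (j : ℤ) : triangular (-j - 1) = triangular j := by
  rw [triangular, triangular]; ring_nf

theorem triangular_natCast (n : ℕ) : triangular n = n * (n + 1) / 2 := by
  rw [← Nat.cast_inj (R := ℤ), natCast_triangular]; push_cast; rfl

theorem triangular_natCast_succ (k : ℕ) : triangular (k + 1 : ℕ) = triangular k + (k + 1) := by
  have := natCast_triangular_add_one k
  push_cast at this ⊢
  omega

def gaussBinom {R : Type*} [Semiring R] (q : R) : ℕ → ℕ → R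
  | _, 0 => 1
  | 0, _ + 1 => 0
  | n + 1, k + 1 => gaussBinom q n k + q ^ (k + 1) * gaussBinom q n (k + 1)

section CommSemiring

variable {R : Type*} [CommSemiring R] (q : R)

@[simp] theorem gaussBinom_zero_right (n : ℕ) : gaussBinom q n 0 = 1 := by
  cases n <;> rfl

theorem gaussBinom_succ_succ (n k : ℕ) :
    gaussBinom q (n + 1) (k + 1) = gaussBinom q n k + q ^ (k + 1) * gaussBinom q n (k + 1) :=
  rfl

theorem gaussBinom_eq_zero_of_lt {n k : ℕ} (h : n < k) : gaussBinom q n k = 0 := by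
  induction n generalizing k with
  | zero => obtain ⟨k, rfl⟩ := Nat.exists_eq_add_of_lt h; rfl
  | succ n ih =>
    obtain ⟨k, rfl⟩ := Nat.exists_eq_add_of_lt h
    rw [gaussBinom_succ_succ, ih (by omega), ih (by omega), mul_zero, add_zero]

@[simp] theorem gaussBinom_self (n : ℕ) : gaussBinom q n n = 1 := by
  induction n with
  | zero => rfl
  | succ n ih =>
    rw [gaussBinom_succ_succ, ih, gaussBinom_eq_zero_of_lt q n.lt_succ_self, mul_zero, add_zero]

theorem sum_range_gaussBinom_succ_mul (n : ℕ) (a : ℕ → R) :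
    ∑ k ∈ range (n + 2), gaussBinom q (n + 1) k * a k =
      ∑ k ∈ range (n + 1), gaussBinom q n k * (a (k + 1) + q ^ k * a k) := by
  have hshift : ∑ k ∈ range (n + 1), gaussBinom q n k * (q ^ k * a k) =
      ∑ k ∈ range (n + 1), q ^ (k + 1) * gaussBinom q n (k + 1) * a (k + 1) + a 0 := by
    rw [← add_zero (∑ k ∈ range (n + 1), _),
      ← mul_eq_zero_of_left (gaussBinom_eq_zero_of_lt q n.lt_succ_self) (q ^ (n + 1) * a (n + 1)),
      ← sum_range_succ, sum_range_succ']
    simp only [gaussBinom_zero_right, pow_zero, one_mul]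
    congr 1
    exact sum_congr rfl fun k _ => by ring
  simp only [mul_add, sum_add_distrib, hshift, sum_range_succ' _ (n + 1), gaussBinom_succ_succ,
    add_mul, gaussBinom_zero_right, one_mul, add_assoc]

theorem prod_range_one_add_mul_pow_succ_eq_sum (z : R) (n : ℕ) :
    ∏ i ∈ range n, (1 + z * q ^ (i + 1)) =
      ∑ k ∈ range (n + 1), gaussBinom q n k * (q ^ triangular k * z ^ k) := by
  induction n generalizing z with
  | zero => simp [triangular]
  | succ n ih =>
    rw [prod_range_succ', sum_range_gaussBinom_succ_mul]
    have hshift : ∀ i, 1 + z * q ^ (i + 1 + 1) = 1 + z * q * q ^ (i + 1) := fun i => by ring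
    rw [prod_congr rfl fun i _ => hshift i, ih, sum_mul]
    refine sum_congr rfl fun k _ => ?_
    rw [triangular_natCast_succ]
    ring

theorem prod_mul_prod_eq_sum_gaussBinom (m s : ℕ) :
    (∏ i ∈ range m, (1 + q ^ (i + 1))) * ∏ i ∈ range s, (1 + q ^ i) =
      ∑ k ∈ range (m + s + 1), gaussBinom q (m + s) k * q ^ triangular ((k : ℤ) - s) := by
  induction s with
  | zero => simpa using prod_range_one_add_mul_pow_succ_eq_sum q 1 m
  | succ s ih =>
    rw [prod_range_succ, ← mul_assoc, ih, ← add_assoc, sum_range_gaussBinom_succ_mul, sum_mul]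
    refine sum_congr rfl fun k _ => ?_
    have h := natCast_triangular_add_one ((k : ℤ) - (s + 1))
    have hexp : k + triangular ((k : ℤ) - (s + 1 : ℕ)) = s + triangular ((k : ℤ) - s) := by
      push_cast at h ⊢; ring_nf at h ⊢; omega
    rw [← pow_add, hexp]
    push_cast
    ring_nf

end CommSemiring

/-- `(q; q)_n`. -/
def qPochhammer {R : Type*} [CommRing R] (q : R) (n : ℕ) : R :=
  ∏ i ∈ range n, (1 - q ^ (i + 1))

section CommRing

variable {R : Type*} [CommRing R] (q : R)

theorem qPochhammer_succ (n : ℕ) :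
    qPochhammer q (n + 1) = qPochhammer q n * (1 - q ^ (n + 1)) :=
  prod_range_succ _ n

theorem gaussBinom_add_mul_qPochhammer (k m : ℕ) :
    gaussBinom q (k + m) k * (qPochhammer q k * qPochhammer q m) = qPochhammer q (k + m) := by
  induction k generalizing m with
  | zero => simp [qPochhammer]
  | succ k ihk =>
    induction m with
    | zero => simp [qPochhammer]
    | succ m ihm =>
      have hk := ihk (m + 1)
      rw [show k + 1 + m = k + (m + 1) by ring] at ihm
      rw [show k + 1 + (m + 1) = k + (m + 1) + 1 by ring, gaussBinom_succ_succ, qPochhammer_succ,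
        qPochhammer_succ, qPochhammer_succ] at *
      linear_combination (1 - q ^ (k + 1)) * hk + q ^ (k + 1) * (1 - q ^ (m + 1)) * ihm

end CommRing

section Field

variable {K : Type*} [Field K] {q : K}

theorem qPochhammer_ne_zero (hq : ∀ i, q ^ (i + 1) ≠ 1) (n : ℕ) : qPochhammer q n ≠ 0 :=
  prod_ne_zero_iff.2 fun i _ => sub_ne_zero.2 (hq i).symm

theorem gaussBinom_add_eq_div (hq : ∀ i, q ^ (i + 1) ≠ 1) (k m : ℕ) :
    gaussBinom q (k + m) k = qPochhammer q (k + m) / (qPochhammer q k * qPochhammer q m) :=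
  eq_div_of_mul_eq (mul_ne_zero (qPochhammer_ne_zero hq k) (qPochhammer_ne_zero hq m))
    (gaussBinom_add_mul_qPochhammer q k m)

theorem gaussBinom_add_comm (hq : ∀ i, q ^ (i + 1) ≠ 1) (k m : ℕ) :
    gaussBinom q (k + m) k = gaussBinom q (k + m) m := by
  rw [gaussBinom_add_eq_div hq, add_comm k m, gaussBinom_add_eq_div hq, mul_comm]

theorem sq_prod_range_one_add_pow_succ_eq_sum [CharZero K] (hq : ∀ i, q ^ (i + 1) ≠ 1)
    (n : ℕ) :
    (∏ i ∈ range n, (1 + q ^ (i + 1))) ^ 2 =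
      ∑ j ∈ range (n + 1), gaussBinom q (2 * n + 1) (n + 1 + j) * q ^ (j * (j + 1) / 2) := by
  have h := prod_mul_prod_eq_sum_gaussBinom q n (n + 1)
  rw [prod_range_succ', show n + (n + 1) + 1 = (n + 1) + (n + 1) by ring, sum_range_add,
    ← sum_range_reflect] at h
  have hlow : ∀ j ∈ range (n + 1), gaussBinom q (n + (n + 1)) (n + 1 - 1 - j) *
      q ^ triangular ((↑(n + 1 - 1 - j) : ℤ) - ↑(n + 1)) =
      gaussBinom q (2 * n + 1) (n + 1 + j) * q ^ (j * (j + 1) / 2) := fun j hj => by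
    have hj := mem_range.1 hj
    rw [show n + (n + 1) = (n - j) + (n + 1 + j) by omega, show n + 1 - 1 - j = n - j by omega,
      gaussBinom_add_comm hq, show n - j + (n + 1 + j) = 2 * n + 1 by omega,
      Nat.cast_sub (by omega), show (n : ℤ) - j - ↑(n + 1) = -j - 1 by push_cast; ring,
      triangular_neg_sub_one, triangular_natCast]
  have hhigh : ∀ j ∈ range (n + 1), gaussBinom q (n + (n + 1)) (n + 1 + j) *
      q ^ triangular ((↑(n + 1 + j) : ℤ) - ↑(n + 1)) =
      gaussBinom q (2 * n + 1) (n + 1 + j) * q ^ (j * (j + 1) / 2) := fun j _ => by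
    rw [show n + (n + 1) = 2 * n + 1 by ring, Nat.cast_add, add_sub_cancel_left,
      triangular_natCast]
  rw [sum_congr rfl hlow, sum_congr rfl hhigh, pow_zero, one_add_one_eq_two, ← two_mul] at h
  exact mul_left_cancel₀ two_ne_zero (by linear_combination h)

end Field

section Real

variable {q : ℝ}

theorem pow_ne_one_of_abs_lt_one (hq : |q| < 1) {n : ℕ} (hn : n ≠ 0) : q ^ n ≠ 1 := fun h =>
  (pow_lt_one₀ (abs_nonneg q) hq hn).ne (by rw [← abs_pow, h, abs_one])

theorem pow_succ_ne_one (hq : |q| < 1) (i : ℕ) : q ^ (i + 1) ≠ 1 :=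
  pow_ne_one_of_abs_lt_one hq i.succ_ne_zero

theorem summable_pow_comp (hq : |q| < 1) {e : ℕ → ℕ} (he : Function.Injective e) :
    Summable fun i => q ^ e i :=
  (summable_geometric_of_abs_lt_one hq).comp_injective he

theorem hasProd_one_add_pow (hq : |q| < 1) {e : ℕ → ℕ} (he : Function.Injective e) :
    HasProd (fun i => 1 + q ^ e i) (∏' i, (1 + q ^ e i)) :=
  (Real.multipliable_one_add_of_summable (summable_pow_comp hq he)).hasProd

theorem hasProd_one_sub_pow (hq : |q| < 1) {e : ℕ → ℕ} (he : Function.Injective e) :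
    HasProd (fun i => 1 - q ^ e i) (∏' i, (1 - q ^ e i)) := by
  simpa only [sub_eq_add_neg] using
    (Real.multipliable_one_add_of_summable (summable_pow_comp hq he).neg).hasProd

theorem tprod_one_sub_pow_ne_zero (hq : |q| < 1) {e : ℕ → ℕ} (he : Function.Injective e)
    (he₀ : ∀ i, e i ≠ 0) : ∏' i, (1 - q ^ e i) ≠ 0 := by
  simpa only [sub_eq_add_neg] using tprod_one_add_ne_zero_of_summable (f := fun i => -q ^ e i)
    (fun i => by
      rw [← sub_eq_add_neg, sub_ne_zero]
      exact (pow_ne_one_of_abs_lt_one hq (he₀ i)).symm)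
    (summable_pow_comp hq he).neg.norm

theorem tprod_one_sub_pow_succ_ne_zero (hq : |q| < 1) : ∏' i : ℕ, (1 - q ^ (i + 1)) ≠ 0 :=
  tprod_one_sub_pow_ne_zero hq (add_left_injective 1) fun i => i.succ_ne_zero

theorem tprod_one_sub_pow_two_mul_add_two_div (hq : |q| < 1) :
    ∏' i : ℕ, (1 - q ^ (2 * i + 2)) / (1 - q ^ (2 * i + 1)) =
      (∏' i : ℕ, (1 - q ^ (i + 1))) * (∏' i : ℕ, (1 + q ^ (i + 1))) ^ 2 := by
  set L := ∏' i : ℕ, (1 - q ^ (i + 1))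
  set F := ∏' i : ℕ, (1 + q ^ (i + 1))
  set A := ∏' i : ℕ, (1 - q ^ (2 * i + 1))
  have hL : HasProd (fun i : ℕ => 1 - q ^ (i + 1)) L :=
    hasProd_one_sub_pow hq (add_left_injective 1)
  have hL₀ : L ≠ 0 := tprod_one_sub_pow_succ_ne_zero hq
  have hodd_inj : Function.Injective fun i : ℕ => 2 * i + 1 := fun i j h => by simpa using h
  have hA : HasProd (fun i : ℕ => 1 - q ^ (2 * i + 1)) A := hasProd_one_sub_pow hq hodd_inj
  have hA₀ : A ≠ 0 := tprod_one_sub_pow_ne_zero hq hodd_inj fun i => (2 * i).succ_ne_zero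
  have heven : HasProd (fun i : ℕ => 1 - q ^ (2 * i + 1 + 1)) (L * F) := by
    convert hL.mul (hasProd_one_add_pow hq (add_left_injective 1)) using 1
    ext i
    ring
  have hAF : A * F = 1 := by
    have hsplit : A * (L * F) = L :=
      (HasProd.even_mul_odd (f := fun i => 1 - q ^ (i + 1)) hA heven).unique hL
    exact mul_right_cancel₀ hL₀ (by linear_combination hsplit)
  rw [(heven.div₀ hA hA₀).tprod_eq, div_eq_iff hA₀]
  linear_combination (-(L * F)) * hAF

theorem tendsto_qPochhammer (hq : |q| < 1) :
    Tendsto (qPochhammer q) atTop (𝓝 (∏' i : ℕ, (1 - q ^ (i + 1)))) :=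
  (hasProd_one_sub_pow hq (add_left_injective 1)).tendsto_prod_nat

theorem exists_abs_gaussBinom_le (hq : |q| < 1) : ∃ B, ∀ n k, |gaussBinom q n k| ≤ B := by
  obtain ⟨A, hA⟩ := isBounded_iff_forall_norm_le.1
    (Metric.isBounded_range_of_tendsto _ (tendsto_qPochhammer hq))
  obtain ⟨C, hC⟩ := isBounded_iff_forall_norm_le.1 (Metric.isBounded_range_of_tendsto _
    ((tendsto_qPochhammer hq).inv₀ (tprod_one_sub_pow_succ_ne_zero hq)))
  have hA' n : |qPochhammer q n| ≤ A := hA _ ⟨n, rfl⟩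
  have hC' n : |(qPochhammer q n)⁻¹| ≤ C := hC _ ⟨n, rfl⟩
  have hA₀ : 0 ≤ A := (abs_nonneg _).trans (hA' 0)
  have hC₀ : 0 ≤ C := (abs_nonneg _).trans (hC' 0)
  refine ⟨A * C * C, fun n k => ?_⟩
  rcases le_or_gt k n with h | h
  · obtain ⟨m, rfl⟩ := Nat.exists_eq_add_of_le h
    rw [gaussBinom_add_eq_div (pow_succ_ne_one hq), div_eq_mul_inv, mul_inv, ← mul_assoc,
      abs_mul, abs_mul]
    exact mul_le_mul (mul_le_mul (hA' _) (hC' _) (abs_nonneg _) hA₀) (hC' _) (abs_nonneg _)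
      (mul_nonneg hA₀ hC₀)
  · rw [gaussBinom_eq_zero_of_lt _ h, abs_zero]
    positivity

theorem tendsto_gaussBinom_add {ι : Type*} {l : Filter ι} (hq : |q| < 1) {a b : ι → ℕ}
    (ha : Tendsto a l atTop) (hb : Tendsto b l atTop) :
    Tendsto (fun n => gaussBinom q (a n + b n) (a n)) l
      (𝓝 (∏' i : ℕ, (1 - q ^ (i + 1)))⁻¹) := by
  have hL₀ := tprod_one_sub_pow_succ_ne_zero hq
  have hD := tendsto_qPochhammer hq
  simp_rw [gaussBinom_add_eq_div (pow_succ_ne_one hq)]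
  have := (hD.comp (ha.atTop_add_atTop hb)).div ((hD.comp ha).mul (hD.comp hb))
    (mul_ne_zero hL₀ hL₀)
  rwa [div_mul_cancel_left₀ hL₀] at this

theorem tendsto_sum_gaussBinom_mul_pow (hq : |q| < 1) :
    Tendsto (fun n => ∑ j ∈ range (n + 1),
        gaussBinom q (2 * n + 1) (n + 1 + j) * q ^ (j * (j + 1) / 2)) atTop
      (𝓝 ((∏' i : ℕ, (1 - q ^ (i + 1)))⁻¹ * ∑' j : ℕ, q ^ (j * (j + 1) / 2))) := by
  obtain ⟨B, hB⟩ := exists_abs_gaussBinom_le hq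
  have hfin n :
      ∑ j ∈ range (n + 1), gaussBinom q (2 * n + 1) (n + 1 + j) * q ^ (j * (j + 1) / 2) =
        ∑' j, gaussBinom q (2 * n + 1) (n + 1 + j) * q ^ (j * (j + 1) / 2) :=
    (tsum_eq_sum fun j hj => by
      rw [gaussBinom_eq_zero_of_lt _ (by simp at hj; omega), zero_mul]).symm
  simp_rw [hfin, ← tsum_mul_left]
  refine tendsto_tsum_of_dominated_convergence (bound := fun j => B * |q| ^ j)
    ((summable_geometric_of_lt_one (abs_nonneg q) hq).mul_left B) (fun j => ?_)
    (Eventually.of_forall fun n j => ?_)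
  · have hlim := tendsto_gaussBinom_add hq (a := fun n => n + 1 + j) (b := fun n => n - j)
      (tendsto_atTop_atTop.2 fun c => ⟨c, fun n hn => by omega⟩)
      (tendsto_atTop_atTop.2 fun c => ⟨c + j, fun n hn => by omega⟩)
    refine (hlim.congr' ?_).mul_const _
    filter_upwards [eventually_ge_atTop j] with n hn
    rw [show n + 1 + j + (n - j) = 2 * n + 1 by omega]
  · have hj : j ≤ j * (j + 1) / 2 := by
      rcases j with _ | j
      · rfl
      · rw [Nat.le_div_iff_mul_le two_pos]; nlinarith
    rw [Real.norm_eq_abs, abs_mul, abs_pow]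
    exact mul_le_mul (hB _ _) (pow_le_pow_of_le_one (abs_nonneg q) hq.le hj) (by positivity)
      ((abs_nonneg _).trans (hB 0 0))

end Real

/-- Gauss's identity: for real `t` with `|t| < 1`,
`∑_{i ≥ 0} t^{i(i+1)/2} = ∏_{i ≥ 1} (1 - t^{2i})/(1 - t^{2i-1})`. -/
theorem gauss_triangular_identity (t : ℝ) (ht : |t| < 1) :
    ∑' i : ℕ, t ^ (i * (i + 1) / 2) =
      ∏' i : ℕ, (1 - t ^ (2 * i + 2)) / (1 - t ^ (2 * i + 1)) := by
  have hF := ((hasProd_one_add_pow ht (add_left_injective 1)).tendsto_prod_nat).pow 2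
  have hlim := tendsto_nhds_unique ((tendsto_sum_gaussBinom_mul_pow ht).congr
    fun n => (sq_prod_range_one_add_pow_succ_eq_sum (pow_succ_ne_one ht) n).symm) hF
  rw [tprod_one_sub_pow_two_mul_add_two_div ht, ← hlim, mul_inv_cancel_left₀
    (tprod_one_sub_pow_succ_ne_zero ht)]
end
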